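/- Let 𝓗 be a finite set of subgroups of a finite group G such that any two distinct subgroups H, H' ∈ 𝓗 intersect trivially (|H ∩ H'| = 1). Then for any positive integer k, the trace norm ‖(1/|𝓗|) Σ_{H∈𝓗} ρ_H^{⊗k} − (I/|G|)^{⊗k}‖₁ ≤ √( (max_{H∈𝓗} |H|)^k / |𝓗| ). -/

import Mathlib

/-! Cauchy–Schwarz on the singular values bounds the trace norm of an `N × N` matrix by `√N`
times its Hilbert–Schmidt norm; here `N = |G|^k`. The Hilbert–Schmidt norm of the Hermitian
difference `Δ` is computed exactly, since traces of products of tensor powers are powers of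
traces and `tr(ρ_H ρ_K) = |H ⊓ K| / |G|`: when the subgroups intersect trivially, each of the
`|𝓗|(|𝓗| - 1)` cross terms equals `1/|G|^k`, as do the terms involving `I/|G|`, and
`tr Δ² = ∑_H (|H|^k - 1) / (|𝓗|² |G|^k) ≤ (max |H|)^k / (|𝓗| |G|^k)`. -/

noncomputable section

open scoped BigOperators ComplexOrder

open Classical in
/-- The coset state `ρ_H = (1/|G|) ∑_g |gH⟩⟨gH|`; its `(x, y)` entry is
`1/|G|` if `x⁻¹ y ∈ H` and `0` otherwise. -/
def cosetState {G : Type*} [Group G] [Fintype G] (H : Subgroup G) : Matrix G G ℂ :=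
  fun x y => if x⁻¹ * y ∈ H then (1 : ℂ) / (Fintype.card G) else 0

/-- `k`-fold tensor power of a matrix. -/
def tensorPow {n : Type*} [Fintype n] (M : Matrix n n ℂ) (k : ℕ) :
    Matrix (Fin k → n) (Fin k → n) ℂ :=
  fun x y => ∏ i, M (x i) (y i)

/-- Trace norm `‖Y‖₁ = tr √(Yᴴ Y)`. -/
def traceNorm {n : Type*} [Fintype n] [DecidableEq n] (Y : Matrix n n ℂ) : ℝ :=
  (((Matrix.posSemidef_conjTranspose_mul_self Y).1.eigenvectorUnitary.1 *
      Matrix.diagonal (((↑) : ℝ → ℂ) ∘ (Real.sqrt ·) ∘ (Matrix.posSemidef_conjTranspose_mul_self Y).1.eigenvalues) *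
      (star (Matrix.posSemidef_conjTranspose_mul_self Y).1.eigenvectorUnitary : Matrix n n ℂ)).trace).re

/-- Operator (spectral) norm of a matrix. -/
def opNorm {n : Type*} [Fintype n] [DecidableEq n] (M : Matrix n n ℂ) : ℝ :=
  ‖Matrix.toEuclideanCLM (𝕜 := ℂ) M‖

/-- Square root of the Moore–Penrose pseudoinverse of a Hermitian matrix
(junk value `0` on non-Hermitian input). -/
def pinvSqrt {n : Type*} [Fintype n] [DecidableEq n] (A : Matrix n n ℂ) : Matrix n n ℂ :=
  if h : A.IsHermitian then
    h.eigenvectorUnitary.1 *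
      Matrix.diagonal (fun i => ((Real.sqrt (h.eigenvalues i))⁻¹ : ℂ)) *
      (star h.eigenvectorUnitary : Matrix n n ℂ)
  else 0

open Matrix

section TraceNorm

variable {n : Type*} [Fintype n] [DecidableEq n]

lemma traceNorm_eq_sum_sqrt_eigenvalues (Y : Matrix n n ℂ) :
    traceNorm Y = ∑ i, √((posSemidef_conjTranspose_mul_self Y).1.eigenvalues i) := by
  set hY := (posSemidef_conjTranspose_mul_self Y).1
  have hUU : (star hY.eigenvectorUnitary : Matrix n n ℂ) * hY.eigenvectorUnitary = 1 :=
    Unitary.star_mul_self_of_mem hY.eigenvectorUnitary.2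
  rw [traceNorm, trace_mul_cycle, hUU, one_mul, trace_diagonal, Complex.re_sum]
  rfl

lemma traceNorm_le_sqrt_card_mul_re_trace (Y : Matrix n n ℂ) :
    traceNorm Y ≤ √(Fintype.card n * (Yᴴ * Y).trace.re) := by
  have hPSD := posSemidef_conjTranspose_mul_self Y
  have hsum_sq : ∑ i, √(hPSD.1.eigenvalues i) ^ 2 = (Yᴴ * Y).trace.re := by
    simp [Real.sq_sqrt (hPSD.eigenvalues_nonneg _), hPSD.1.trace_eq_sum_eigenvalues]
  rw [traceNorm_eq_sum_sqrt_eigenvalues, ← hsum_sq, Real.le_sqrt (by positivity) (by positivity)]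
  simpa using sq_sum_le_card_mul_sum_sq (s := Finset.univ) (f := fun i => √(hPSD.1.eigenvalues i))

end TraceNorm

lemma trace_mul_self_average_sub {ι α : Type*} [Fintype α] {s : Finset ι} (hs : s.Nonempty)
    (A : ι → Matrix α α ℂ) (B : Matrix α α ℂ) {c : ℂ}
    (hAB : ∀ i ∈ s, (A i * B).trace = c) (hBB : (B * B).trace = c) :
    (((1 / (s.card : ℂ)) • ∑ i ∈ s, A i - B) * ((1 / (s.card : ℂ)) • ∑ i ∈ s, A i - B)).trace =
      (1 / (s.card : ℂ)) ^ 2 * ∑ i ∈ s, ∑ j ∈ s, (A i * A j).trace - c := by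
  have hm : (s.card : ℂ) ≠ 0 := Nat.cast_ne_zero.mpr hs.card_pos.ne'
  have hBA : ∀ i ∈ s, (B * A i).trace = c := fun i hi => trace_mul_comm B (A i) ▸ hAB i hi
  simp only [sub_mul, mul_sub, smul_mul_smul_comm, Matrix.smul_mul, Matrix.mul_smul,
    Finset.sum_mul, Finset.mul_sum, trace_sub, trace_smul, trace_sum, Finset.sum_congr rfl hAB,
    Finset.sum_congr rfl hBA, hBB, Finset.sum_const, nsmul_eq_mul, smul_eq_mul]
  rw [Finset.sum_comm]
  field_simp
  ring

section TensorPow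

variable {n : Type*} [Fintype n]

lemma tensorPow_mul (M N : Matrix n n ℂ) (k : ℕ) :
    tensorPow M k * tensorPow N k = tensorPow (M * N) k := by
  classical
  ext x z
  simp only [tensorPow, mul_apply, ← Finset.prod_mul_distrib]
  rw [Finset.prod_univ_sum, Fintype.piFinset_univ]

lemma trace_tensorPow (M : Matrix n n ℂ) (k : ℕ) : (tensorPow M k).trace = M.trace ^ k := by
  classical
  rw [← Fin.prod_const]
  simp only [trace, diag]
  rw [Finset.prod_univ_sum, Fintype.piFinset_univ]
  rfl

lemma conjTranspose_tensorPow (M : Matrix n n ℂ) (k : ℕ) :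
    (tensorPow M k)ᴴ = tensorPow Mᴴ k := by
  ext x y
  simp [tensorPow, star_prod]

lemma Matrix.IsHermitian.tensorPow {M : Matrix n n ℂ} (hM : M.IsHermitian) (k : ℕ) :
    (tensorPow M k).IsHermitian := by
  rw [IsHermitian, conjTranspose_tensorPow, hM]

end TensorPow

section CosetState

variable {G : Type*} [Group G] [Fintype G]

lemma isHermitian_cosetState (H : Subgroup G) : (cosetState H).IsHermitian := by
  classical
  ext x y
  simp only [conjTranspose_apply, cosetState, ← inv_mem_iff (x := y⁻¹ * x)]
  split_ifs <;> simp_all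

lemma trace_cosetState (H : Subgroup G) : (cosetState H).trace = 1 := by
  have hd : (Fintype.card G : ℂ) ≠ 0 := Nat.cast_ne_zero.mpr Fintype.card_ne_zero
  simp [trace, cosetState, H.one_mem, hd]

lemma trace_cosetState_mul_cosetState (H K : Subgroup G) :
    (cosetState H * cosetState K).trace = Nat.card ↥(H ⊓ K) / Fintype.card G := by
  classical
  have hd : (Fintype.card G : ℂ) ≠ 0 := Nat.cast_ne_zero.mpr Fintype.card_ne_zero
  have hterm : ∀ x y : G, cosetState H x y * cosetState K y x =
      if x⁻¹ * y ∈ H ⊓ K then 1 / (Fintype.card G : ℂ) ^ 2 else 0 := by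
    intro x y
    have hinv : y⁻¹ * x = (x⁻¹ * y)⁻¹ := by group
    simp only [cosetState, hinv, inv_mem_iff, Subgroup.mem_inf]
    split_ifs <;> simp_all [sq]
  have hrow : ∀ x : G, ∑ y, (if x⁻¹ * y ∈ H ⊓ K then 1 / (Fintype.card G : ℂ) ^ 2 else 0) =
      (Nat.card ↥(H ⊓ K) : ℂ) / (Fintype.card G : ℂ) ^ 2 := by
    intro x
    rw [← Equiv.sum_comp (Equiv.mulLeft x)]
    simp [Finset.sum_ite, Nat.card_eq_fintype_card, Fintype.card_subtype, div_eq_mul_inv,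
      Subgroup.mem_inf]
  simp only [trace, diag, mul_apply, hterm, hrow, Finset.sum_const, Finset.card_univ, nsmul_eq_mul]
  field_simp

lemma trace_tensorPow_cosetState_mul_maximallyMixed [DecidableEq G] (H : Subgroup G) (k : ℕ) :
    (tensorPow (cosetState H) k *
      tensorPow ((1 / (Fintype.card G : ℂ)) • (1 : Matrix G G ℂ)) k).trace =
      (1 / (Fintype.card G : ℂ)) ^ k := by
  rw [tensorPow_mul, trace_tensorPow, Matrix.mul_smul, mul_one, trace_smul, trace_cosetState,
    smul_eq_mul, mul_one]

lemma trace_tensorPow_maximallyMixed_mul_self [DecidableEq G] (k : ℕ) :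
    (tensorPow ((1 / (Fintype.card G : ℂ)) • (1 : Matrix G G ℂ)) k *
      tensorPow ((1 / (Fintype.card G : ℂ)) • (1 : Matrix G G ℂ)) k).trace =
      (1 / (Fintype.card G : ℂ)) ^ k := by
  have hd : (Fintype.card G : ℂ) ≠ 0 := Nat.cast_ne_zero.mpr Fintype.card_ne_zero
  rw [tensorPow_mul, trace_tensorPow, smul_mul_smul, one_mul, trace_smul, trace_one, smul_eq_mul]
  field_simp

lemma sum_trace_tensorPow_cosetState_mul {𝓗 : Finset (Subgroup G)}
    (htriv : ∀ H ∈ 𝓗, ∀ H' ∈ 𝓗, H ≠ H' → Nat.card ↥(H ⊓ H') = 1)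
    {H : Subgroup G} (hH : H ∈ 𝓗) (k : ℕ) :
    ∑ H' ∈ 𝓗, (tensorPow (cosetState H) k * tensorPow (cosetState H') k).trace =
      ((Nat.card ↥H : ℂ) / Fintype.card G) ^ k +
        (𝓗.card - 1) * (1 / (Fintype.card G : ℂ)) ^ k := by
  classical
  have hother : ∀ H' ∈ 𝓗.erase H,
      (tensorPow (cosetState H) k * tensorPow (cosetState H') k).trace =
        (1 / (Fintype.card G : ℂ)) ^ k := by
    intro H' hH'
    rw [tensorPow_mul, trace_tensorPow, trace_cosetState_mul_cosetState,
      htriv H hH H' (Finset.mem_of_mem_erase hH') (Finset.ne_of_mem_erase hH').symm, Nat.cast_one]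
  rw [← Finset.add_sum_erase _ _ hH, Finset.sum_congr rfl hother, tensorPow_mul, trace_tensorPow,
    trace_cosetState_mul_cosetState, inf_idem, Finset.sum_const, Finset.card_erase_of_mem hH,
    nsmul_eq_mul, Nat.cast_pred (Finset.card_pos.mpr ⟨H, hH⟩)]

lemma trace_mul_self_tcs_sub_maximallyMixed [DecidableEq G] {𝓗 : Finset (Subgroup G)}
    (h𝓗 : 𝓗.Nonempty) (htriv : ∀ H ∈ 𝓗, ∀ H' ∈ 𝓗, H ≠ H' → Nat.card ↥(H ⊓ H') = 1) (k : ℕ) :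
    (((1 / (𝓗.card : ℂ)) • ∑ H ∈ 𝓗, tensorPow (cosetState H) k -
        tensorPow ((1 / (Fintype.card G : ℂ)) • (1 : Matrix G G ℂ)) k) *
      ((1 / (𝓗.card : ℂ)) • ∑ H ∈ 𝓗, tensorPow (cosetState H) k -
        tensorPow ((1 / (Fintype.card G : ℂ)) • (1 : Matrix G G ℂ)) k)).trace =
      (((∑ H ∈ 𝓗, ((Nat.card ↥H : ℝ) ^ k - 1)) / (𝓗.card ^ 2 * Fintype.card G ^ k) : ℝ) : ℂ) := by
  have hm : (𝓗.card : ℂ) ≠ 0 := Nat.cast_ne_zero.mpr h𝓗.card_pos.ne'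
  have hd : (Fintype.card G : ℂ) ≠ 0 := Nat.cast_ne_zero.mpr Fintype.card_ne_zero
  rw [trace_mul_self_average_sub h𝓗 _ _
      (fun H _ => trace_tensorPow_cosetState_mul_maximallyMixed H k)
      (trace_tensorPow_maximallyMixed_mul_self k),
    Finset.sum_congr rfl fun H hH => sum_trace_tensorPow_cosetState_mul htriv hH k]
  push_cast
  simp only [Finset.sum_add_distrib, Finset.sum_sub_distrib, Finset.sum_const, nsmul_eq_mul,
    div_pow, ← Finset.sum_div]
  field_simp
  ring

end CosetState

lemma sum_pow_sub_one_le_card_mul_sup_pow {ι : Type*} (s : Finset ι) (f : ι → ℕ) (k : ℕ) :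
    ∑ i ∈ s, ((f i : ℝ) ^ k - 1) ≤ s.card * ((s.sup f : ℕ) : ℝ) ^ k := by
  rw [← nsmul_eq_mul, ← Finset.sum_const]
  refine Finset.sum_le_sum fun i hi => ?_
  have hle : (f i : ℝ) ^ k ≤ ((s.sup f : ℕ) : ℝ) ^ k := by
    gcongr
    exact Finset.le_sup hi
  linarith

theorem tcs_traceNorm_bound_general {G : Type*} [Group G] [Fintype G] [DecidableEq G]
    (𝓗 : Finset (Subgroup G)) (h𝓗 : 𝓗.Nonempty)
    (htriv : ∀ H ∈ 𝓗, ∀ H' ∈ 𝓗, H ≠ H' → Nat.card ↥(H ⊓ H') = 1)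
    (k : ℕ) :
    traceNorm ((1 / (𝓗.card : ℂ)) • ∑ H ∈ 𝓗, tensorPow (cosetState H) k -
        tensorPow ((1 / (Fintype.card G : ℂ)) • (1 : Matrix G G ℂ)) k) ≤
      Real.sqrt (((𝓗.sup fun H => Nat.card ↥H : ℕ) : ℝ) ^ k / (𝓗.card : ℝ)) := by
  set Δ := (1 / (𝓗.card : ℂ)) • ∑ H ∈ 𝓗, tensorPow (cosetState H) k -
    tensorPow ((1 / (Fintype.card G : ℂ)) • (1 : Matrix G G ℂ)) k
  have hΔ : Δ.IsHermitian :=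
    (IsHermitian.smul (isSelfAdjoint_sum 𝓗 fun H _ => (isHermitian_cosetState H).tensorPow k)
      (.div (.one _) (.natCast _))).sub
      ((isHermitian_one.smul (.div (.one _) (.natCast _))).tensorPow k)
  have hd : (Fintype.card G : ℝ) ≠ 0 := Nat.cast_ne_zero.mpr Fintype.card_ne_zero
  calc traceNorm Δ ≤ √(Fintype.card (Fin k → G) * (Δᴴ * Δ).trace.re) :=
        traceNorm_le_sqrt_card_mul_re_trace Δ
    _ = √((∑ H ∈ 𝓗, ((Nat.card ↥H : ℝ) ^ k - 1)) / 𝓗.card ^ 2) := by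
        rw [hΔ.eq, trace_mul_self_tcs_sub_maximallyMixed h𝓗 htriv, Complex.ofReal_re,
          Fintype.card_fun, Fintype.card_fin, Nat.cast_pow]
        field_simp
    _ ≤ √(𝓗.card * ((𝓗.sup fun H => Nat.card ↥H : ℕ) : ℝ) ^ k / 𝓗.card ^ 2) := by
        gcongr
        exact sum_pow_sub_one_le_card_mul_sup_pow 𝓗 _ k
    _ = √(((𝓗.sup fun H => Nat.card ↥H : ℕ) : ℝ) ^ k / 𝓗.card) := by
        field_simp

/-- Trace-norm bound for TCS with pairwise trivially intersecting subgroups. -/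
theorem tcs_traceNorm_bound {G : Type*} [Group G] [Fintype G] [DecidableEq G]
    (𝓗 : Finset (Subgroup G)) (h𝓗 : 𝓗.Nonempty)
    (htriv : ∀ H ∈ 𝓗, ∀ H' ∈ 𝓗, H ≠ H' → Nat.card ↥(H ⊓ H') = 1)
    (k : ℕ) (hk : 0 < k) :
    traceNorm ((1 / (𝓗.card : ℂ)) • ∑ H ∈ 𝓗, tensorPow (cosetState H) k -
        tensorPow ((1 / (Fintype.card G : ℂ)) • (1 : Matrix G G ℂ)) k) ≤
      Real.sqrt (((𝓗.sup fun H => Nat.card ↥H : ℕ) : ℝ) ^ k / (𝓗.card : ℝ)) :=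
  tcs_traceNorm_bound_general 𝓗 h𝓗 htriv k
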